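/- arXiv:2012.00704 — 2 statements merged into one kernel-verified Lean document; each statement's English description precedes it below -/
import Mathlib

section
/- Let P(x) = Σ_{i=0}^Δ a_i x^i be a univariate real polynomial of degree Δ > 0 with |a_Δ| ≥ d for some d > 0. Let w > 0 and x_l ∈ ℝ. If |P(x)| ≤ w for all x ∈ [x_l, x_l + t] with t ≥ 0, then t ≤ (Δ+1)^3 · (w/d)^(1/Δ). -/
open Polynomial Finset

/-!
Sample `P` at the `Δ + 1` equally spaced nodes `xl + i t / Δ` of the interval. Lagrange
interpolation writes the leading coefficient as `∑ P(vᵢ) / ∏_{j ≠ i} (vᵢ - vⱼ)`, and each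
denominator is at least `(t / Δ)^Δ` in absolute value, so `d (t / Δ)^Δ ≤ (Δ + 1) w`.
Taking `Δ`-th roots gives `t ≤ Δ (Δ + 1) (w / d)^(1/Δ)`.
-/

theorem Finset.pow_card_sub_one_le_prod_abs_sub {ι : Type*} [DecidableEq ι] {s : Finset ι}
    {v : ι → ℝ} {h : ℝ} (hh : 0 ≤ h) (hsep : ∀ i ∈ s, ∀ j ∈ s, i ≠ j → h ≤ |v i - v j|)
    {i : ι} (hi : i ∈ s) :
    h ^ (#s - 1) ≤ ∏ j ∈ s.erase i, |v i - v j| := by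
  rw [← card_erase_of_mem hi, ← prod_const]
  refine prod_le_prod (fun _ _ => hh) fun j hj => ?_
  obtain ⟨hji, hj⟩ := mem_erase.mp hj
  exact hsep i hi j hj hji.symm

theorem abs_coeff_mul_pow_le_of_separated_nodes {ι : Type*} [DecidableEq ι] {s : Finset ι}
    {v : ι → ℝ} {h w : ℝ} (hh : 0 < h) (hsep : ∀ i ∈ s, ∀ j ∈ s, i ≠ j → h ≤ |v i - v j|)
    {P : ℝ[X]} (hP : P.degree < #s) (hval : ∀ i ∈ s, |P.eval (v i)| ≤ w) :
    |P.coeff (#s - 1)| * h ^ (#s - 1) ≤ #s * w := by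
  have hinj : Set.InjOn v s := fun i hi j hj hij => by
    by_contra hne
    have := hsep i hi j hj hne
    rw [hij, sub_self, abs_zero] at this
    exact this.not_gt hh
  have hterm : ∀ i ∈ s, |P.eval (v i) / ∏ j ∈ s.erase i, (v i - v j)| * h ^ (#s - 1) ≤ w := by
    intro i hi
    have hprod := pow_card_sub_one_le_prod_abs_sub hh.le hsep hi
    rw [abs_div, abs_prod, div_mul_eq_mul_div, div_le_iff₀ ((pow_pos hh _).trans_le hprod)]
    exact mul_le_mul (hval i hi) hprod (by positivity) ((abs_nonneg _).trans (hval i hi))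
  calc |P.coeff (#s - 1)| * h ^ (#s - 1)
      ≤ (∑ i ∈ s, |P.eval (v i) / ∏ j ∈ s.erase i, (v i - v j)|) * h ^ (#s - 1) := by
        rw [Lagrange.coeff_eq_sum hinj hP]
        gcongr
        exact abs_sum_le_sum_abs _ _
    _ ≤ ∑ _i ∈ s, w := by
        rw [sum_mul]
        exact sum_le_sum hterm
    _ = #s * w := by rw [sum_const, nsmul_eq_mul]

theorem le_abs_add_mul_sub_add_mul_of_ne {n : ℕ} (a h : ℝ) (hh : 0 ≤ h) {i j : Fin (n + 1)}
    (hij : i ≠ j) :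
    h ≤ |(a + i * h) - (a + j * h)| := by
  have hone : (1 : ℝ) ≤ |(i : ℝ) - j| := by
    rcases Fin.lt_or_lt_of_ne hij with hlt | hlt
    · rw [abs_sub_comm, abs_of_pos (by simpa using hlt)]
      have : (i : ℝ) + 1 ≤ j := by exact_mod_cast Fin.val_add_one_le_of_lt hlt
      linarith
    · rw [abs_of_pos (by simpa using hlt)]
      have : (j : ℝ) + 1 ≤ i := by exact_mod_cast Fin.val_add_one_le_of_lt hlt
      linarith
  rw [add_sub_add_left_eq_sub, ← sub_mul, abs_mul, abs_of_nonneg hh]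
  nlinarith

theorem abs_coeff_mul_pow_le_of_abs_eval_le_on_Icc {n : ℕ} (hn : 0 < n) {P : ℝ[X]}
    (hP : P.natDegree ≤ n) {a t w : ℝ} (ht : 0 < t)
    (hbound : ∀ x ∈ Set.Icc a (a + t), |P.eval x| ≤ w) :
    |P.coeff n| * (t / n) ^ n ≤ (n + 1) * w := by
  have hh : 0 < t / n := div_pos ht (by exact_mod_cast hn)
  have hnodes := abs_coeff_mul_pow_le_of_separated_nodes (s := univ) (w := w) (P := P)
    (v := fun i : Fin (n + 1) => a + i * (t / n)) hh
    (fun _ _ _ _ hij => le_abs_add_mul_sub_add_mul_of_ne a _ hh.le hij) ?_ ?_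
  · simpa using hnodes
  · simp only [card_univ, Fintype.card_fin]
    exact (degree_le_of_natDegree_le hP).trans_lt (by exact_mod_cast n.lt_succ_self)
  · intro i _
    refine hbound _ ⟨?_, ?_⟩
    · have : 0 ≤ (i : ℝ) * (t / n) := by positivity
      linarith
    · have hi : (i : ℝ) ≤ n := by exact_mod_cast i.is_le
      have : (i : ℝ) * (t / n) ≤ n * (t / n) := by gcongr
      rw [mul_div_cancel₀ _ (by exact_mod_cast hn.ne')] at this
      linarith

theorem le_mul_rpow_one_div_of_pow_le {n : ℕ} (hn : n ≠ 0) {h a c : ℝ} (hh : 0 ≤ h) (ha : 1 ≤ a)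
    (hc : 0 ≤ c) (hpow : h ^ n ≤ a * c) : h ≤ a * c ^ ((1 : ℝ) / n) := by
  have hroot : (c ^ ((1 : ℝ) / n)) ^ n = c := by
    rw [one_div, Real.rpow_inv_natCast_pow hc hn]
  refine (pow_le_pow_iff_left₀ hh (by positivity) hn).mp ?_
  calc h ^ n ≤ a * c := hpow
    _ ≤ a ^ n * c := by gcongr; exact le_self_pow₀ ha hn
    _ = (a * c ^ ((1 : ℝ) / n)) ^ n := by rw [mul_pow, hroot]

theorem stmt_0_general (Δ : ℕ) (hΔ : 0 < Δ) (P : Polynomial ℝ) (hdeg : P.natDegree = Δ)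
    (d : ℝ) (hd : 0 < d) (hlead : d ≤ |P.coeff Δ|)
    (w : ℝ) (xl t : ℝ) (ht : 0 ≤ t)
    (hbound : ∀ x ∈ Set.Icc xl (xl + t), |P.eval x| ≤ w) :
    t ≤ ((Δ : ℝ) + 1) ^ 3 * (w / d) ^ ((1 : ℝ) / Δ) := by
  have hw : 0 ≤ w := (abs_nonneg _).trans (hbound xl ⟨le_rfl, le_add_of_nonneg_right ht⟩)
  rcases ht.eq_or_lt with rfl | ht
  · positivity
  have hΔR : (0 : ℝ) < Δ := by exact_mod_cast hΔ
  have hcoeff := abs_coeff_mul_pow_le_of_abs_eval_le_on_Icc hΔ hdeg.le ht hbound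
  have hpow : (t / Δ) ^ Δ ≤ (Δ + 1) * (w / d) := by
    rw [mul_div_assoc', le_div_iff₀ hd, mul_comm]
    exact (mul_le_mul_of_nonneg_right hlead (by positivity)).trans hcoeff
  have hstep :=
    le_mul_rpow_one_div_of_pow_le hΔ.ne' (by positivity) (by linarith) (by positivity) hpow
  rw [div_le_iff₀ hΔR] at hstep
  calc t ≤ ((Δ : ℝ) + 1) * (w / d) ^ ((1 : ℝ) / Δ) * Δ := hstep
    _ ≤ ((Δ : ℝ) + 1) ^ 3 * (w / d) ^ ((1 : ℝ) / Δ) := by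
        rw [mul_right_comm]
        gcongr
        nlinarith [sq_nonneg ((Δ : ℝ) + 1)]

theorem stmt_0 (Δ : ℕ) (hΔ : 0 < Δ) (P : Polynomial ℝ) (hdeg : P.natDegree = Δ)
    (d : ℝ) (hd : 0 < d) (hlead : d ≤ |P.coeff Δ|)
    (w : ℝ) (hw : 0 < w) (xl t : ℝ) (ht : 0 ≤ t)
    (hbound : ∀ x ∈ Set.Icc xl (xl + t), |P.eval x| ≤ w) :
    t ≤ ((Δ : ℝ) + 1) ^ 3 * (w / d) ^ ((1 : ℝ) / Δ) :=
  stmt_0_general Δ hΔ P hdeg d hd hlead w xl t ht hbound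
end

section
/- Let P and Q be real polynomials of degree at most Δ, and suppose i is the largest index at which the coefficients of P and Q differ, with i ≥ 1 and |coeff_i(P) − coeff_i(Q)| ≥ d > 0. If |P(x) − Q(x)| ≤ w for all x in an interval [x₁, x₂], then x₂ − x₁ ≤ (i+1)³ (w/d)^(1/i). -/
/-!
Let `R = P - Q` and `h = (x₂ - x₁) / i`. The `i`-th forward difference of `R` with step `h` at `x₁`
is `i! hⁱ` times the `i`-th coefficient of `R`. On the other hand it only involves the values
`R (x₁ + k h)`, `k ≤ i`, which lie in `[-w, w]`, and each differencing at most doubles a bound, so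
it is at most `2ⁱ w` in absolute value. Hence `d hⁱ ≤ 2ⁱ w`, that is
`x₂ - x₁ = i h ≤ 2 i (w / d)^(1/i) ≤ (i + 1)³ (w / d)^(1/i)`.
-/

open Polynomial fwdDiff

theorem abs_fwdDiff_iter_le {M K : Type*} [AddCommMonoid M] [CommRing K] [LinearOrder K]
    [IsOrderedRing K] (h : M) (n : ℕ) (f : M → K) (y : M) (w : K)
    (hf : ∀ k ≤ n, |f (y + k • h)| ≤ w) : |Δ_[h] ^[n] f y| ≤ 2 ^ n * w := by
  induction n generalizing f w with
  | zero => simpa using hf 0 le_rfl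
  | succ n ih =>
    rw [Function.iterate_succ_apply, pow_succ, mul_assoc]
    refine ih _ _ fun k hk => ?_
    have h₁ := hf k (by omega)
    have h₂ := hf (k + 1) (by omega)
    rw [succ_nsmul, ← add_assoc] at h₂
    calc |Δ_[h] f (y + k • h)| ≤ |f (y + k • h + h)| + |f (y + k • h)| := abs_sub _ _
      _ ≤ 2 * w := by rw [two_mul]; exact add_le_add h₂ h₁

namespace Polynomial

section CommRing

variable {R : Type*} [CommRing R] {P : R[X]} {n : ℕ}

theorem coeff_taylor_of_natDegree_le (hP : P.natDegree ≤ n) (r : R) :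
    (taylor r P).coeff n = P.coeff n := by
  rcases hP.lt_or_eq with hlt | rfl
  · rw [coeff_eq_zero_of_natDegree_lt hlt,
      coeff_eq_zero_of_natDegree_lt (by rwa [natDegree_taylor])]
  · exact coeff_taylor_natDegree r P

theorem fwdDiff_iter_one_eval_of_natDegree_le (hP : P.natDegree ≤ n) (x : R) :
    Δ_[1] ^[n] P.eval x = n.factorial * P.coeff n := by
  rcases hP.lt_or_eq with hlt | rfl
  · simp [fwdDiff_iter_eq_zero_of_degree_lt hlt, coeff_eq_zero_of_natDegree_lt hlt]
  · rw [fwdDiff_iter_degree_eq_factorial, Pi.smul_apply, smul_eq_mul, mul_comm]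
    rfl

/-- The step `h` is reduced to step `1` by the substitution `t ↦ x + t h`. -/
theorem fwdDiff_iter_eval_of_natDegree_le (hP : P.natDegree ≤ n) (h x : R) :
    Δ_[h] ^[n] P.eval x = n.factorial * h ^ n * P.coeff n := by
  set S := (taylor x P).comp (C h * X)
  have hS : ∀ t, S.eval t = P.eval (t * h + x) := fun t => by
    rw [eval_comp, taylor_eval, eval_mul, eval_C, eval_X, mul_comm]
  have hSdeg : S.natDegree ≤ n :=
    natDegree_le_iff_coeff_eq_zero.2 fun m hm => by
      rw [comp_C_mul_X_coeff, coeff_eq_zero_of_natDegree_lt (by rw [natDegree_taylor]; omega),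
        zero_mul]
  calc Δ_[h] ^[n] P.eval x = Δ_[1] ^[n] S.eval 0 := by
        simp only [fwdDiff_iter_eq_sum_shift, hS, nsmul_eq_mul, mul_one, zero_add, add_comm x]
    _ = n.factorial * h ^ n * P.coeff n := by
        rw [fwdDiff_iter_one_eval_of_natDegree_le hSdeg, comp_C_mul_X_coeff,
          coeff_taylor_of_natDegree_le hP]
        ring

end CommRing

theorem factorial_mul_abs_coeff_mul_pow_le {K : Type*} [CommRing K] [LinearOrder K]
    [IsStrictOrderedRing K] {R : K[X]} {n : ℕ} (hR : R.natDegree ≤ n) {x h w : K} (hh : 0 ≤ h)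
    (hb : ∀ t ∈ Set.Icc x (x + n * h), |R.eval t| ≤ w) :
    n.factorial * |R.coeff n| * h ^ n ≤ 2 ^ n * w := by
  have hmem : ∀ k ≤ n, x + k • h ∈ Set.Icc x (x + n * h) := fun k hk => by
    rw [nsmul_eq_mul]
    exact ⟨le_add_of_nonneg_right (by positivity),
      add_le_add_right (mul_le_mul_of_nonneg_right (Nat.cast_le.2 hk) hh) x⟩
  calc n.factorial * |R.coeff n| * h ^ n = |Δ_[h] ^[n] R.eval x| := by
        rw [fwdDiff_iter_eval_of_natDegree_le hR, abs_mul, abs_mul, abs_pow, abs_of_nonneg hh,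
          Nat.abs_cast]
        ring
    _ ≤ 2 ^ n * w := abs_fwdDiff_iter_le h n _ x w fun k hk => hb _ (hmem k hk)

theorem sub_le_of_forall_mem_Icc_abs_eval_le {R : ℝ[X]} {n : ℕ} (hn : n ≠ 0)
    (hR : R.natDegree ≤ n) {d w x₁ x₂ : ℝ} (hd : 0 < d) (hdR : d ≤ |R.coeff n|) (hx : x₁ ≤ x₂)
    (hb : ∀ x ∈ Set.Icc x₁ x₂, |R.eval x| ≤ w) :
    x₂ - x₁ ≤ 2 * n * (w / d) ^ ((1 : ℝ) / n) := by
  have hn₀ : (0 : ℝ) < n := by positivity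
  set h := (x₂ - x₁) / n
  have hh : 0 ≤ h := div_nonneg (sub_nonneg.2 hx) hn₀.le
  have hwidth : x₂ - x₁ = n * h := (mul_div_cancel₀ _ hn₀.ne').symm
  have hfwd := factorial_mul_abs_coeff_mul_pow_le hR hh (w := w) (x := x₁)
    (by rwa [← hwidth, add_sub_cancel])
  have hpow : (h / 2) ^ n ≤ w / d := by
    have hfac : (1 : ℝ) ≤ n.factorial := by exact_mod_cast n.factorial_pos
    have : d * h ^ n ≤ n.factorial * |R.coeff n| * h ^ n := by
      gcongr
      exact hdR.trans (le_mul_of_one_le_left (abs_nonneg _) hfac)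
    rw [div_pow, div_le_div_iff₀ (by positivity) hd]
    linarith
  have hroot : h / 2 ≤ (w / d) ^ ((1 : ℝ) / n) := by
    rw [one_div, Real.le_rpow_inv_iff_of_pos (by positivity) ((pow_nonneg (by positivity) n).trans
      hpow) hn₀, Real.rpow_natCast]
    exact hpow
  rw [hwidth]
  linarith [mul_le_mul_of_nonneg_left hroot hn₀.le]

end Polynomial

theorem stmt_4_general (i : ℕ) (P Q : Polynomial ℝ)
    (hi1 : 1 ≤ i)
    (hlargest : ∀ j, i < j → P.coeff j = Q.coeff j)
    (d : ℝ) (hd : 0 < d) (hdle : d ≤ |P.coeff i - Q.coeff i|)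
    (w : ℝ) (hw : 0 < w) (x₁ x₂ : ℝ) (hx : x₁ ≤ x₂)
    (hbound : ∀ x ∈ Set.Icc x₁ x₂, |P.eval x - Q.eval x| ≤ w) :
    x₂ - x₁ ≤ ((i : ℝ) + 1) ^ 3 * (w / d) ^ ((1 : ℝ) / i) := by
  have hdeg : (P - Q).natDegree ≤ i := natDegree_le_iff_coeff_eq_zero.2 fun j hj => by
    rw [coeff_sub, hlargest j hj, sub_self]
  have hwidth := sub_le_of_forall_mem_Icc_abs_eval_le (R := P - Q) (by omega) hdeg hd
    (by rwa [coeff_sub]) hx (by simpa only [eval_sub] using hbound)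
  have hi : (1 : ℝ) ≤ i := by exact_mod_cast hi1
  have hcube : 2 * (i : ℝ) ≤ ((i : ℝ) + 1) ^ 3 := by nlinarith [sq_nonneg ((i : ℝ) + 1)]
  exact hwidth.trans (mul_le_mul_of_nonneg_right hcube (by positivity))

theorem stmt_4 (Δ i : ℕ) (P Q : Polynomial ℝ)
    (hP : P.natDegree ≤ Δ) (hQ : Q.natDegree ≤ Δ)
    (hi1 : 1 ≤ i) (hdiff : P.coeff i ≠ Q.coeff i)
    (hlargest : ∀ j, i < j → P.coeff j = Q.coeff j)
    (d : ℝ) (hd : 0 < d) (hdle : d ≤ |P.coeff i - Q.coeff i|)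
    (w : ℝ) (hw : 0 < w) (x₁ x₂ : ℝ) (hx : x₁ ≤ x₂)
    (hbound : ∀ x ∈ Set.Icc x₁ x₂, |P.eval x - Q.eval x| ≤ w) :
    x₂ - x₁ ≤ ((i : ℝ) + 1) ^ 3 * (w / d) ^ ((1 : ℝ) / i) :=
  stmt_4_general i P Q hi1 hlargest d hd hdle w hw x₁ x₂ hx hbound
end
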